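/- arXiv:2311.16704 — 3 statements merged into one kernel-verified Lean document; each statement's English description precedes it below -/
import Mathlib

section
/- In the sedenion algebra 𝕊, with α = e₁ + e₁₀ and β = e₇ + e₁₂, the polynomial f(x) = (1/2)β x² + β has α as a root (since α² = −2), but there is no g(x) ∈ 𝕊[x] with f(x) = g(x)·(x − α). In particular, having a root λ does not imply x − λ is a right factor over 𝕊. -/
/-- Cayley–Dickson double (with γ = -1) of an algebra with involution. -/
def CD (A : Type*) : Type _ := A × A

namespace CD

variable {A : Type*}

instance [AddCommGroup A] : AddCommGroup (CD A) := inferInstanceAs (AddCommGroup (A × A))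
noncomputable instance [AddCommGroup A] [Module ℝ A] : Module ℝ (CD A) :=
  inferInstanceAs (Module ℝ (A × A))

/-- Build an element of the double from its two halves. -/
def mk (a b : A) : CD A := (a, b)

section
set_option linter.unusedSectionVars false

/-- A star operation fixing `1`. -/
class StarOne (A : Type*) [One A] [Star A] : Prop where
  star_one : star (1 : A) = 1

variable [NonAssocRing A] [StarAddMonoid A] [StarOne A]

instance : One (CD A) := ⟨((1 : A), 0)⟩
instance : Mul (CD A) :=
  ⟨fun x y => (x.1 * y.1 - star y.2 * x.2, y.2 * x.1 + x.2 * star y.1)⟩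
instance : Star (CD A) := ⟨fun x => (star x.1, -x.2)⟩

lemma mul_def (x y : CD A) :
    x * y = (x.1 * y.1 - star y.2 * x.2, y.2 * x.1 + x.2 * star y.1) := rfl
lemma one_def : (1 : CD A) = ((1 : A), 0) := rfl
lemma star_def (x : CD A) : star x = (star x.1, -x.2) := rfl
lemma add_def (x y : CD A) : x + y = (x.1 + y.1, x.2 + y.2) := rfl
lemma zero_def : (0 : CD A) = ((0 : A), 0) := rfl

instance instNonAssocRing : NonAssocRing (CD A) where
  __ := (inferInstance : AddCommGroup (CD A))
  left_distrib a b c := by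
    refine Prod.ext ?_ ?_
    · show a.1 * (b.1 + c.1) - star (b.2 + c.2) * a.2 =
        (a.1 * b.1 - star b.2 * a.2) + (a.1 * c.1 - star c.2 * a.2)
      rw [mul_add, star_add, add_mul]; abel
    · show (b.2 + c.2) * a.1 + a.2 * star (b.1 + c.1) =
        (b.2 * a.1 + a.2 * star b.1) + (c.2 * a.1 + a.2 * star c.1)
      rw [add_mul, star_add, mul_add]; abel
  right_distrib a b c := by
    refine Prod.ext ?_ ?_
    · show (a.1 + b.1) * c.1 - star c.2 * (a.2 + b.2) =
        (a.1 * c.1 - star c.2 * a.2) + (b.1 * c.1 - star c.2 * b.2)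
      rw [add_mul, mul_add]; abel
    · show c.2 * (a.1 + b.1) + (a.2 + b.2) * star c.1 =
        (c.2 * a.1 + a.2 * star c.1) + (c.2 * b.1 + b.2 * star c.1)
      rw [add_mul, mul_add]; abel
  zero_mul a := by
    refine Prod.ext ?_ ?_
    · show (0 : A) * a.1 - star a.2 * 0 = 0
      simp
    · show a.2 * (0 : A) + 0 * star a.1 = 0
      simp
  mul_zero a := by
    refine Prod.ext ?_ ?_
    · show a.1 * (0 : A) - star (0 : A) * a.2 = 0
      simp
    · show (0 : A) * a.1 + a.2 * star (0 : A) = 0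
      simp
  one_mul a := by
    refine Prod.ext ?_ ?_
    · show (1 : A) * a.1 - star a.2 * 0 = a.1
      simp
    · show a.2 * (1 : A) + 0 * star a.1 = a.2
      simp
  mul_one a := by
    refine Prod.ext ?_ ?_
    · show a.1 * (1 : A) - star (0 : A) * a.2 = a.1
      simp
    · show (0 : A) * a.1 + a.2 * star (1 : A) = a.2
      simp [StarOne.star_one]

instance instStarAddMonoid : StarAddMonoid (CD A) where
  star_involutive x := by
    refine Prod.ext ?_ ?_
    · show star (star x.1) = x.1
      simp
    · show -(-x.2) = x.2
      simp
  star_add x y := by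
    refine Prod.ext ?_ ?_
    · show star (x.1 + y.1) = star x.1 + star y.1
      simp
    · show -(x.2 + y.2) = -x.2 + -y.2
      simp [add_comm]

instance instStarOne : StarOne (CD A) :=
  ⟨Prod.ext (StarOne.star_one) (show -(0 : A) = 0 from neg_zero)⟩

end

end CD

instance : CD.StarOne ℝ := ⟨by simp⟩

/-- The real octonions, as a three-fold Cayley–Dickson double of ℝ. -/
def Octonion : Type := CD (CD (CD ℝ))

instance : NonAssocRing Octonion := inferInstanceAs (NonAssocRing (CD (CD (CD ℝ))))
instance : StarAddMonoid Octonion := inferInstanceAs (StarAddMonoid (CD (CD (CD ℝ))))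
instance : CD.StarOne Octonion := inferInstanceAs (CD.StarOne (CD (CD (CD ℝ))))
noncomputable instance : Module ℝ Octonion := inferInstanceAs (Module ℝ (CD (CD (CD ℝ))))

/-- The real sedenions, as the Cayley–Dickson double of the octonions. -/
def Sedenion : Type := CD Octonion

instance : NonAssocRing Sedenion := inferInstanceAs (NonAssocRing (CD Octonion))
instance : StarAddMonoid Sedenion := inferInstanceAs (StarAddMonoid (CD Octonion))
instance : CD.StarOne Sedenion := inferInstanceAs (CD.StarOne (CD Octonion))
noncomputable instance : Module ℝ Sedenion := inferInstanceAs (Module ℝ (CD Octonion))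

/-- Assemble a complex number, quaternion, octonion, sedenion from real coordinates. -/
def mkC (f : ℕ → ℝ) (k : ℕ) : CD ℝ := CD.mk (f k) (f (k+1))
def mkH (f : ℕ → ℝ) (k : ℕ) : CD (CD ℝ) := CD.mk (mkC f k) (mkC f (k+2))
def mkO (f : ℕ → ℝ) (k : ℕ) : Octonion := CD.mk (mkH f k) (mkH f (k+4))
def mkS (f : ℕ → ℝ) : Sedenion := CD.mk (mkO f 0) (mkO f 8)

/-- The standard basis `e₀, …, e₁₅` of the sedenions. -/
def sE (n : ℕ) : Sedenion := mkS (fun k => if k = n then 1 else 0)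

/-- The standard basis `e₀, …, e₇` of the octonions. -/
def oE (n : ℕ) : Octonion := mkO (fun k => if k = n then 1 else 0) 0

/-- Powers in a (power-associative) non-associative algebra. -/
def cdpow {A : Type*} [One A] [Mul A] (x : A) : ℕ → A
  | 0 => 1
  | n+1 => cdpow x n * x

/-- The coefficients of the sedenion polynomial `f(x) = (1/2) β x² + β`. -/
noncomputable def fc3 (i : ℕ) : Sedenion :=
  if i = 0 then sE 7 + sE 12 else if i = 2 then (2 : ℝ)⁻¹ • (sE 7 + sE 12) else 0

/-!
Writing `f = g · (x - α)` coefficientwise gives `c₀ = -g₀α` and `cᵢ₊₁ = gᵢ - gᵢ₊₁α`.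
Since `g` has finite support and `cᵢ = 0` for `i ≥ 3`, downward induction gives `gᵢ = 0` for
`i ≥ 2`; then `g₁ = c₂ = β/2` and `g₀ = g₁α = (β/2)α = 0`, because `β` is a zero divisor
annihilating `α` from the left. Hence `β = c₀ = -g₀α = 0`, which is false.
-/

lemma cdpow_two {A : Type*} [MulOneClass A] (x : A) : cdpow x 2 = x * x := by
  rw [cdpow, cdpow, cdpow, one_mul]

lemma eq_zero_of_eq_succ_mul {R : Type*} [MulZeroClass R] {g : ℕ → R} {a : R} {n : ℕ}
    (hg : ∃ N, ∀ i ≥ N, g i = 0) (h : ∀ i ≥ n, g i = g (i + 1) * a) : ∀ i ≥ n, g i = 0 := by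
  obtain ⟨N, hN⟩ := hg
  suffices ∀ k i, n ≤ i → N ≤ i + k → g i = 0 from fun i hi => this (N - i) i hi (by omega)
  intro k
  induction k with
  | zero => exact fun i _ hi => hN i hi
  | succ k ih =>
    intro i hi hik
    rw [h i hi, ih (i + 1) (by omega) (by omega), zero_mul]

/-- Over any nonassociative ring, if `c₂x² + c₀ = g(x)(x - a)` with `c₂a = 0`, then `c₀ = 0`. -/
lemma coeff_zero_eq_zero_of_eq_mul_X_sub {R : Type*} [NonUnitalNonAssocRing R]
    {c g : ℕ → R} {a : R} (hg : ∃ N, ∀ i ≥ N, g i = 0) (h0 : c 0 = -(g 0 * a))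
    (hsucc : ∀ i, c (i + 1) = g i - g (i + 1) * a) (hc : ∀ i ≥ 3, c i = 0) (hc1 : c 1 = 0)
    (hc2 : c 2 * a = 0) : c 0 = 0 := by
  have hrec : ∀ i ≥ 2, g i = g (i + 1) * a := fun i hi =>
    sub_eq_zero.mp ((hsucc i).symm.trans (hc (i + 1) (by omega)))
  have hg2 : g 2 = 0 := eq_zero_of_eq_succ_mul hg hrec 2 le_rfl
  have hg1 : g 1 = c 2 := by rw [hsucc 1, hg2, zero_mul, sub_zero]
  have hg0 : g 0 = 0 := by
    rw [sub_eq_zero.mp ((hsucc 0).symm.trans hc1), hg1, hc2]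
  rw [h0, hg0, zero_mul, neg_zero]

namespace CD

variable {A : Type*}

@[simp] lemma mk_eq_mk_iff {a b c d : A} : mk a b = mk c d ↔ a = c ∧ b = d := Prod.mk_inj

section Additive

variable [AddCommGroup A] (a b c d : A)

@[simp] lemma mk_add_mk : mk a b + mk c d = mk (a + c) (b + d) := rfl
@[simp] lemma mk_sub_mk : mk a b - mk c d = mk (a - c) (b - d) := rfl
@[simp] lemma neg_mk : -mk a b = mk (-a) (-b) := rfl
@[simp] lemma smul_mk [Module ℝ A] (r : ℝ) : r • mk a b = mk (r • a) (r • b) := rfl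
lemma mk_zero_zero : mk (0 : A) 0 = 0 := rfl

end Additive

section Multiplicative

variable [NonAssocRing A] [StarAddMonoid A] (a b c d : A)

@[simp] lemma mk_mul_mk : mk a b * mk c d = mk (a * c - star d * b) (d * a + b * star c) := rfl
@[simp] lemma star_mk : star (mk a b) = mk (star a) (-b) := rfl

omit [StarAddMonoid A] in
lemma one_eq_mk : (1 : CD A) = mk 1 0 := rfl

end Multiplicative

end CD

/- `mkO`, `mkS` and `sE` retyped in the plain tower `CD (CD (CD (CD ℝ)))`: through the type
synonyms `Octonion` and `Sedenion` the generic `CD` simp lemmas above do not fire. -/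
def mkO' (f : ℕ → ℝ) (k : ℕ) : CD (CD (CD ℝ)) := CD.mk (mkH f k) (mkH f (k + 4))
def mkS' (f : ℕ → ℝ) : CD (CD (CD (CD ℝ))) := CD.mk (mkO' f 0) (mkO' f 8)
def sE' (n : ℕ) : CD (CD (CD (CD ℝ))) := mkS' (fun k => if k = n then 1 else 0)

local notation "α" => sE 1 + sE 10
local notation "β" => sE 7 + sE 12

lemma alpha_mul_alpha : α * α = -2 := by
  rw [← one_add_one_eq_two]
  change (sE' 1 + sE' 10) * (sE' 1 + sE' 10) = -(1 + 1)
  simp [sE', mkS', mkO', mkH, mkC, CD.one_eq_mk, ← CD.mk_zero_zero]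
  norm_num

lemma half_beta_mul_alpha : ((2 : ℝ)⁻¹ • β) * α = 0 := by
  change ((2 : ℝ)⁻¹ • (sE' 7 + sE' 12)) * (sE' 1 + sE' 10) = 0
  simp [sE', mkS', mkO', mkH, mkC, ← CD.mk_zero_zero]

lemma beta_ne_zero : β ≠ 0 := by
  change sE' 7 + sE' 12 ≠ 0
  simp [sE', mkS', mkO', mkH, mkC, ← CD.mk_zero_zero]

/-- In the sedenions, with `α = e₁ + e₁₀` and `β = e₇ + e₁₂`, the
polynomial `f(x) = (1/2) β x² + β` has `α` as a root (indeed `α² = -2`), yet there is no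
polynomial `g(x) ∈ 𝕊[x]` (given by finitely supported coefficients `g i`) with
`f(x) = g(x)·(x - α)`; the product `g(x)(x - α)` has constant coefficient `-(g 0 · α)`
and `(i+1)`-st coefficient `g i - g (i+1) · α`. -/
theorem stmt3 :
    cdpow (sE 1 + sE 10) 2 = -2 ∧
    ((2 : ℝ)⁻¹ • (sE 7 + sE 12)) * cdpow (sE 1 + sE 10) 2 + (sE 7 + sE 12) = 0 ∧
    ¬ ∃ g : ℕ → Sedenion, (∃ N, ∀ i ≥ N, g i = 0) ∧
        fc3 0 = -(g 0 * (sE 1 + sE 10)) ∧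
        (∀ i, fc3 (i + 1) = g i - g (i + 1) * (sE 1 + sE 10)) := by
  have hα : cdpow α 2 = -2 := (cdpow_two _).trans alpha_mul_alpha
  refine ⟨hα, ?_, ?_⟩
  · rw [hα, mul_neg, mul_two, ← add_smul]
    norm_num
  · rintro ⟨g, hg, h0, hsucc⟩
    have hc : ∀ i ≥ 3, fc3 i = 0 := fun i hi => by
      rw [fc3, if_neg (by omega), if_neg (by omega)]
    have hc2 : fc3 2 * α = 0 := by simpa [fc3] using half_beta_mul_alpha
    have hβ : fc3 0 = 0 := coeff_zero_eq_zero_of_eq_mul_X_sub hg h0 hsucc hc (by simp [fc3]) hc2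
    exact beta_ne_zero (by simpa [fc3] using hβ)
end

section
/- Let A be an octonion division algebra over a field F, B ∈ M_n(A), λ ∈ A a left eigenvalue of B with eigenvector v ∈ Aⁿ (i.e., Bv = λv, v ≠ 0). Then for any nonzero e ∈ A, the element eλ is a left eigenvalue of the matrix eB with associated eigenvector v·e (componentwise right multiplication). -/
/-- Let `A` be an octonion division algebra (in particular a
non-associative ring without zero divisors satisfying the Moufang identity
`(xy)(zx) = (x(yz))x`). If `λ` is a left eigenvalue of `B ∈ Mₙ(A)` with eigenvector `v`,
then for any nonzero `e ∈ A`, `eλ` is a left eigenvalue of the matrix `eB` with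
associated eigenvector `v·e` (componentwise right multiplication). -/
theorem stmt10 {A : Type*} [NonAssocRing A] [NoZeroDivisors A]
    (hMoufang : ∀ x y z : A, (x * y) * (z * x) = (x * (y * z)) * x)
    {n : ℕ} (B : Matrix (Fin n) (Fin n) A) (lam : A) (v : Fin n → A)
    (hv : v ≠ 0) (heig : B.mulVec v = lam • v) (e : A) (he : e ≠ 0) :
    (fun j => v j * e) ≠ 0 ∧
    (Matrix.of fun i j => e * B i j).mulVec (fun j => v j * e)
      = (e * lam) • (fun j => v j * e) := by
  constructor
  · intro h
    apply hv
    funext i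
    have hi : v i * e = 0 := congrFun h i
    rcases mul_eq_zero.mp hi with h1 | h2
    · exact h1
    · exact absurd h2 he
  · funext i
    have heq : ∑ j, B i j * v j = lam * v i := congrFun heig i
    simp only [Matrix.mulVec, dotProduct, Matrix.of_apply, Pi.smul_apply,
      smul_eq_mul]
    calc ∑ j, (e * B i j) * (v j * e)
        = ∑ j, (e * (B i j * v j)) * e := by
          refine Finset.sum_congr rfl fun j _ => hMoufang e (B i j) (v j)
      _ = (∑ j, e * (B i j * v j)) * e := by rw [Finset.sum_mul]
      _ = (e * ∑ j, B i j * v j) * e := by rw [Finset.mul_sum]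
      _ = (e * (lam * v i)) * e := by rw [heq]
      _ = (e * lam) * (v i * e) := (hMoufang e lam (v i)).symm
end

section
/- Let A be an octonion division algebra over a field F and B = [[a,b],[c,d]] ∈ M₂(A) with b ≠ 0. If λ ∈ A is a left eigenvalue of B with eigenvector v = (v₁, v₂)ᵀ, then v₁ ≠ 0; moreover v₂v₁⁻¹ is a root of the polynomial v₁⁻¹·f(x) where f(x) = b x² + (a−d)x − c, and λ = a + (b v₂)v₁⁻¹. -/
/-- Let `A` be an octonion division algebra (alternative with the
Moufang identity `(xy)(zx) = (x(yz))x`, no zero divisors, nonzero elements invertible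
with `x⁻¹(xy) = y` and `(yx)x⁻¹ = y`), and `B = [[a,b],[c,d]] ∈ M₂(A)` with `b ≠ 0`.
If `λ` is a left eigenvalue of `B` with eigenvector `v = (v₁, v₂)ᵀ`, then `v₁ ≠ 0`;
moreover `s = v₂ v₁⁻¹` is a root of `v₁⁻¹·f(x)` where `f(x) = b x² + (a - d) x - c`,
and `λ = a + (b v₂) v₁⁻¹`. -/
theorem stmt14 {A : Type*} [NonAssocRing A] [Inv A] [NoZeroDivisors A]
    (hMoufang : ∀ x y z : A, (x * y) * (z * x) = (x * (y * z)) * x)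
    (hinv_mul : ∀ x : A, x ≠ 0 → ∀ y, x⁻¹ * (x * y) = y)
    (hmul_inv : ∀ x : A, x ≠ 0 → ∀ y, (y * x) * x⁻¹ = y)
    (a b c d lam : A) (hb : b ≠ 0) (v : Fin 2 → A) (hv : v ≠ 0)
    (heig : Matrix.mulVec !![a, b; c, d] v = lam • v) :
    v 0 ≠ 0 ∧
    ((v 0)⁻¹ * b) * ((v 1 * (v 0)⁻¹) * (v 1 * (v 0)⁻¹))
      + ((v 0)⁻¹ * (a - d)) * (v 1 * (v 0)⁻¹) - (v 0)⁻¹ * c = 0 ∧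
    lam = a + (b * v 1) * (v 0)⁻¹ := by
  have h0 : a * v 0 + b * v 1 = lam * v 0 := by
    have := congrFun heig 0
    simpa [Matrix.mulVec, dotProduct, Fin.sum_univ_two] using this
  have h1 : c * v 0 + d * v 1 = lam * v 1 := by
    have := congrFun heig 1
    simpa [Matrix.mulVec, dotProduct, Fin.sum_univ_two] using this
  have hv0 : v 0 ≠ 0 := by
    intro h
    have hb1 : b * v 1 = 0 := by
      have := h0; rw [h, mul_zero, mul_zero, zero_add] at this; exact this
    have hv1 : v 1 = 0 := by
      rcases mul_eq_zero.mp hb1 with h' | h'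
      · exact absurd h' hb
      · exact h'
    apply hv; funext i; fin_cases i <;> simp [h, hv1]
  have h1ne : (1 : A) ≠ 0 := by
    intro h
    exact hv0 (by rw [← mul_one (v 0), h, mul_zero])
  -- basic facts about inverses
  have inv_mul_self : ∀ x : A, x ≠ 0 → x⁻¹ * x = 1 := fun x hx => by
    have := hinv_mul x hx 1; rwa [mul_one] at this
  have mul_inv_self : ∀ x : A, x ≠ 0 → x * x⁻¹ = 1 := fun x hx => by
    have := hmul_inv x hx 1; rwa [one_mul] at this
  have inv_ne : ∀ x : A, x ≠ 0 → x⁻¹ ≠ 0 := fun x hx h => by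
    exact h1ne (by rw [← inv_mul_self x hx, h, zero_mul])
  have inv_inv' : ∀ x : A, x ≠ 0 → (x⁻¹)⁻¹ = x := fun x hx => by
    have := hinv_mul x⁻¹ (inv_ne x hx) x
    rwa [inv_mul_self x hx, mul_one] at this
  have mic : ∀ x : A, x ≠ 0 → ∀ t, (t * x⁻¹) * x = t := fun x hx t => by
    have := hmul_inv x⁻¹ (inv_ne x hx) t
    rwa [inv_inv' x hx] at this
  have flex : ∀ x z : A, x * (z * x) = (x * z) * x := fun x z => by
    have := hMoufang x 1 z; simpa using this
  -- the other inverse property: x * (x⁻¹ * t) = t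
  have milc : ∀ x : A, x ≠ 0 → ∀ t, x * (x⁻¹ * t) = t := fun x hx t => by
    have key := hMoufang x x⁻¹ t
    rw [mul_inv_self x hx, one_mul] at key
    -- key : t * x = (x * (x⁻¹ * t)) * x
    have := congrArg (fun y => y * x⁻¹) key
    rw [hmul_inv x hx t, hmul_inv x hx (x * (x⁻¹ * t))] at this
    exact this.symm
  -- right alternativity: t * (x * x) = (t * x) * x
  have right_alt : ∀ t x : A, t * (x * x) = (t * x) * x := by
    intro t x
    by_cases hx : x = 0
    · simp [hx]
    · have key := hMoufang x (x⁻¹ * t) x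
      rw [milc x hx t, flex x (x⁻¹ * t), milc x hx t] at key
      exact key
  -- the eigenvalue formula
  set w : A := (v 0)⁻¹ with hw
  have lam_eq : lam = a + (b * v 1) * w := by
    have := congrArg (fun y => y * w) h0
    rw [add_mul, hmul_inv (v 0) hv0 a, hmul_inv (v 0) hv0 lam] at this
    exact this.symm
  refine ⟨hv0, ?_, lam_eq⟩
  set u : A := b * v 1 with hu
  -- star equation
  have star : (u * w) * v 1 + (a - d) * v 1 - c * v 0 = 0 := by
    have h2 : lam * v 1 = a * v 1 + (u * w) * v 1 := by rw [lam_eq, add_mul]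
    have h3 : c * v 0 + d * v 1 = a * v 1 + (u * w) * v 1 := by rw [h1, h2]
    rw [sub_mul]
    have h4 : (u * w) * v 1 = c * v 0 + d * v 1 - a * v 1 := by
      rw [h3]; abel
    rw [h4]; abel
  -- rewrite each of the three terms
  have t1 : (w * b) * ((v 1 * w) * (v 1 * w)) = (w * ((u * w) * v 1)) * w := by
    rw [right_alt (w * b) (v 1 * w), hMoufang w b (v 1), ← flex w u,
      hMoufang w (u * w) (v 1)]
  have t2 : (w * (a - d)) * (v 1 * w) = (w * ((a - d) * v 1)) * w :=
    hMoufang w (a - d) (v 1)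
  have t3 : w * c = (w * (c * v 0)) * w := by
    have := hMoufang w c (v 0)
    rwa [mul_inv_self (v 0) hv0, mul_one] at this
  rw [t1, t2, t3, ← add_mul, ← sub_mul, ← mul_add, ← mul_sub, star, mul_zero, zero_mul]
end
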